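/- Let κ be an infinite cardinal, s ∈ 𝕊_κ, and let m : κ⁺ → ℤ be a ρ₂-modifier (a continuous, eventually constant ℤ-valued function) that is legal for s, meaning (s + m)(ξ) ≥ 0 for all ξ < |s|. Then s + m (the pointwise sum restricted to the domain of s) belongs to 𝕊_κ. -/

import Mathlib

open Cardinal

universe u

/-- The order type of a set of ordinals (one universe up). -/
noncomputable def otp (s : Set Ordinal.{u}) : Ordinal.{u + 1} :=
  @Ordinal.type s (Subrel ((· < ·) : Ordinal.{u} → Ordinal.{u} → Prop) (· ∈ s)) inferInstance

/-- `C` is unbounded in (cofinal below) `x`. -/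
def UnbddBelow (C : Set Ordinal.{u}) (x : Ordinal.{u}) : Prop :=
  ∀ β < x, ∃ α ∈ C, β < α ∧ α < x

/-- The set `Cₙᵗ = {α < l : t α ≤ n}`. -/
def Ct (t : Ordinal.{u} → ℕ) (l : Ordinal.{u}) (n : ℕ) : Set Ordinal.{u} :=
  {α | α < l ∧ t α ≤ n}

/-- Membership in `𝕊_κ`: `t` has domain a successor ordinal `l < κ⁺`, each `Cₙᵗ` is
closed, at limit ordinals `t` takes the least value `n` with `Cₙᵗ` unbounded below, and
every interval disjoint from `Cₙ₋₁ᵗ` meets `Cₙᵗ` in a set of order type `< κ·ω`. -/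
def InSkappa (κ : Cardinal.{u}) (l : Ordinal.{u}) (t : Ordinal.{u} → ℕ) : Prop :=
  (∃ δ, l = δ + 1) ∧ l < (Order.succ κ).ord ∧
  (∀ n : ℕ, ∀ x < l, Order.IsSuccLimit x → UnbddBelow (Ct t l n) x → t x ≤ n) ∧
  (∀ x < l, Order.IsSuccLimit x →
    UnbddBelow (Ct t l (t x)) x ∧ ∀ m : ℕ, UnbddBelow (Ct t l m) x → t x ≤ m) ∧
  (∀ n : ℕ, ∀ I : Set Ordinal.{u}, I ⊆ Set.Iio l → I.OrdConnected →
    (∀ x ∈ I, n ≤ t x) →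
    otp (Ct t l n ∩ I) < Ordinal.lift.{u + 1} (κ.ord * Ordinal.omega0))

/-!
A continuous modifier is constant on a final segment `[β, γ)` below every nonzero `γ`. Where
`m` is constant with value `c`, the level sets of `s + m` are those of `s` shifted by `c`; this
transfers the limit clauses directly. For the order-type clause, induction on `γ ≤ l` splits
`Cₙ^{s+m} ∩ I ∩ γ` into a part below `β`, handled by induction, and a part inside `[β, γ)`,
which is a level set of `s`; the bound `κ·ω` is additively principal, so the sum stays below it.
-/

open Ordinal Set

lemma otp_mono {A B : Set Ordinal.{u}} (h : A ⊆ B) : otp A ≤ otp B :=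
  RelEmbedding.ordinal_type_le ⟨⟨inclusion h, inclusion_injective h⟩, Iff.rfl⟩

lemma otp_union_le {A B : Set Ordinal.{u}} (h : ∀ a ∈ A, ∀ b ∈ B, a < b) :
    otp (A ∪ B) ≤ otp A + otp B := by
  classical
  rw [otp, otp, otp, ← type_sum_lex]
  refine RelEmbedding.ordinal_type_le (RelEmbedding.ofMonotone
    (fun x => if hx : x.1 ∈ A then Sum.inl ⟨x.1, hx⟩ else Sum.inr ⟨x.1, x.2.resolve_left hx⟩) ?_)
  intro a b (hab : a.1 < b.1)
  by_cases ha : a.1 ∈ A <;> by_cases hb : b.1 ∈ A <;> simp only [ha, hb, dif_pos]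
  · exact Sum.Lex.inl hab
  · exact Sum.Lex.sep _ _
  · exact absurd (h b.1 hb a.1 (a.2.resolve_left ha)) hab.not_gt
  · exact Sum.Lex.inr hab

lemma otp_inter_Iio_lt {B : Ordinal.{u + 1}} (hB : IsPrincipal (· + ·) B) (hB0 : 0 < B)
    {D : Set Ordinal.{u}} {γ₀ : Ordinal.{u}}
    (hpiece : ∀ γ ≤ γ₀, γ ≠ 0 → ∃ β < γ, otp (D ∩ Ico β γ) < B) :
    ∀ γ ≤ γ₀, otp (D ∩ Iio γ) < B := by
  intro γ
  induction γ using WellFoundedLT.induction with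
  | ind γ ih =>
    intro hγ
    rcases eq_or_ne γ 0 with rfl | hγ0
    · rwa [show D ∩ Iio 0 = ∅ by simp, otp, type_eq_zero_of_empty]
    obtain ⟨β, hβγ, hβ⟩ := hpiece γ hγ hγ0
    have hsplit : D ∩ Iio γ = (D ∩ Iio β) ∪ (D ∩ Ico β γ) := by
      rw [← inter_union_distrib_left, Iio_union_Ico_eq_Iio hβγ.le]
    rw [hsplit]
    calc otp ((D ∩ Iio β) ∪ (D ∩ Ico β γ)) ≤ otp (D ∩ Iio β) + otp (D ∩ Ico β γ) :=
          otp_union_le fun a ha b hb => ha.2.trans_le hb.2.1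
      _ < B := hB (ih β hβγ (hβγ.le.trans hγ)) hβ

lemma isPrincipal_add_lift_mul_omega0 (c : Ordinal.{u}) :
    IsPrincipal (· + ·) (Ordinal.lift.{u + 1} (c * ω)) := by
  rw [Ordinal.lift_mul, lift_omega0]
  exact isPrincipal_add_mul_of_isPrincipal_add _ one_lt_omega0.ne' isPrincipal_add_omega0

lemma UnbddBelow.mono_Ico {C D : Set Ordinal.{u}} {β x : Ordinal.{u}} (hβ : β < x)
    (hCD : C ∩ Ico β x ⊆ D) (hC : UnbddBelow C x) : UnbddBelow D x := by
  intro γ hγ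
  obtain ⟨α, hαC, hlt, hαx⟩ := hC (max β γ) (max_lt hβ hγ)
  exact ⟨α, hCD ⟨hαC, (le_max_left _ _).trans hlt.le, hαx⟩, (le_max_right _ _).trans_lt hlt, hαx⟩

lemma exists_lt_forall_Ico_eq {α : Type*} {m : Ordinal.{u} → α} {γ : Ordinal.{u}} (hγ : γ ≠ 0)
    (hcont : Order.IsSuccLimit γ → ∃ β < γ, ∀ ξ, β ≤ ξ → ξ ≤ γ → m ξ = m γ) :
    ∃ β < γ, ∀ ξ ∈ Ico β γ, m ξ = m β := by
  rcases zero_or_succ_or_isSuccLimit γ with rfl | ⟨δ, rfl⟩ | hlim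
  · exact absurd rfl hγ
  · refine ⟨δ, Order.lt_succ δ, fun ξ hξ => ?_⟩
    rw [le_antisymm (Order.lt_succ_iff.1 hξ.2) hξ.1]
  · obtain ⟨β, hβγ, hβ⟩ := hcont hlim
    exact ⟨β, hβγ, fun ξ hξ => (hβ ξ hξ.1 hξ.2.le).trans (hβ β le_rfl hβγ.le).symm⟩

/-- The function `s + m` of the paper; `toNat` only truncates where `m` is not legal for `s`. -/
def addModifier (s : Ordinal.{u} → ℕ) (m : Ordinal.{u} → ℤ) : Ordinal.{u} → ℕ :=
  fun ξ => ((s ξ : ℤ) + m ξ).toNat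

section addModifier

variable {κ : Cardinal.{u}} {s : Ordinal.{u} → ℕ} {m : Ordinal.{u} → ℤ} {l β x : Ordinal.{u}}
  {c : ℤ} {n : ℕ}

lemma mem_Ct_addModifier {ξ : Ordinal.{u}} :
    ξ ∈ Ct (addModifier s m) l n ↔ ξ < l ∧ (s ξ : ℤ) + m ξ ≤ n := by
  simp only [Ct, addModifier, mem_ofPred_eq, Int.toNat_le]

lemma unbddBelow_Ct_addModifier_of_unbddBelow_Ct {k : ℕ} (hβ : β < x)
    (hm : ∀ ξ ∈ Ico β x, m ξ = c) (hk : (n : ℤ) = k + c) (h : UnbddBelow (Ct s l k) x) :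
    UnbddBelow (Ct (addModifier s m) l n) x :=
  h.mono_Ico hβ fun ξ ⟨hξk, hξ⟩ => by
    obtain ⟨hξl, hξk : s ξ ≤ k⟩ := hξk
    have := hm ξ hξ
    exact mem_Ct_addModifier.2 ⟨hξl, by omega⟩

lemma exists_unbddBelow_Ct_of_addModifier (hβ : β < x) (hm : ∀ ξ ∈ Ico β x, m ξ = c)
    (h : UnbddBelow (Ct (addModifier s m) l n) x) :
    ∃ k : ℕ, (n : ℤ) = k + c ∧ UnbddBelow (Ct s l k) x := by
  obtain ⟨α, hα, hβα, hαx⟩ := h β hβ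
  have hcn : c ≤ n := by
    have := (mem_Ct_addModifier.1 hα).2
    have := hm α ⟨hβα.le, hαx⟩
    omega
  refine ⟨(n - c).toNat, by omega, h.mono_Ico hβ fun ξ ⟨hξ, hξI⟩ => ?_⟩
  obtain ⟨hξl, hξn⟩ := mem_Ct_addModifier.1 hξ
  have := hm ξ hξI
  exact ⟨hξl, by omega⟩

lemma InSkappa.addModifier_le_of_unbddBelow (hs : InSkappa κ l s) (hx : x < l)
    (hlim : Order.IsSuccLimit x) (hcont : ∃ β < x, ∀ ξ, β ≤ ξ → ξ ≤ x → m ξ = m x)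
    (h : UnbddBelow (Ct (addModifier s m) l n) x) : addModifier s m x ≤ n := by
  obtain ⟨β, hβx, hβ⟩ := hcont
  obtain ⟨k, hk, hk'⟩ :=
    exists_unbddBelow_Ct_of_addModifier hβx (fun ξ hξ => hβ ξ hξ.1 hξ.2.le) h
  have := hs.2.2.1 k x hx hlim hk'
  simp only [addModifier]
  omega

lemma InSkappa.unbddBelow_Ct_addModifier (hs : InSkappa κ l s) (hx : x < l)
    (hlim : Order.IsSuccLimit x) (hcont : ∃ β < x, ∀ ξ, β ≤ ξ → ξ ≤ x → m ξ = m x)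
    (hlegal : 0 ≤ (s x : ℤ) + m x) :
    UnbddBelow (Ct (addModifier s m) l (addModifier s m x)) x := by
  obtain ⟨β, hβx, hβ⟩ := hcont
  exact unbddBelow_Ct_addModifier_of_unbddBelow_Ct hβx (fun ξ hξ => hβ ξ hξ.1 hξ.2.le)
    (Int.toNat_of_nonneg hlegal) (hs.2.2.2.1 x hx hlim).1

lemma InSkappa.lift_ord_mul_omega0_pos (hs : InSkappa κ l s) :
    0 < Ordinal.lift.{u + 1} (κ.ord * ω) :=
  pos_of_gt (hs.2.2.2.2 0 ∅ (empty_subset _) ordConnected_empty (by simp))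

lemma InSkappa.otp_Ct_addModifier_inter_lt_of_eqOn (hs : InSkappa κ l s)
    (hlegal : ∀ ξ < l, 0 ≤ (s ξ : ℤ) + m ξ) {I : Set Ordinal.{u}} (hIl : I ⊆ Iio l)
    (hIc : I.OrdConnected) (hn : ∀ x ∈ I, n ≤ addModifier s m x) (hm : ∀ ξ ∈ I, m ξ = c) :
    otp (Ct (addModifier s m) l n ∩ I) < Ordinal.lift.{u + 1} (κ.ord * ω) := by
  refine (otp_mono ?_).trans_lt (hs.2.2.2.2 (n - c).toNat I hIl hIc fun x hx => ?_)
  · rintro ξ ⟨hξ, hξI⟩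
    obtain ⟨hξl, hξn⟩ := mem_Ct_addModifier.1 hξ
    have := hm ξ hξI
    exact ⟨⟨hξl, by omega⟩, hξI⟩
  · have h₁ := hn x hx
    have h₂ := hlegal x (hIl hx)
    have := hm x hx
    simp only [addModifier] at h₁
    omega

lemma InSkappa.otp_Ct_addModifier_inter_lt (hs : InSkappa κ l s)
    (hcont : ∀ x ≤ l, Order.IsSuccLimit x → ∃ β < x, ∀ ξ, β ≤ ξ → ξ ≤ x → m ξ = m x)
    (hlegal : ∀ ξ < l, 0 ≤ (s ξ : ℤ) + m ξ) {I : Set Ordinal.{u}} (hIl : I ⊆ Iio l)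
    (hIc : I.OrdConnected) (hn : ∀ x ∈ I, n ≤ addModifier s m x) :
    otp (Ct (addModifier s m) l n ∩ I) < Ordinal.lift.{u + 1} (κ.ord * ω) := by
  have hpiece : ∀ γ ≤ l, γ ≠ 0 → ∃ β < γ,
      otp (Ct (addModifier s m) l n ∩ I ∩ Ico β γ) < Ordinal.lift.{u + 1} (κ.ord * ω) := by
    intro γ hγ hγ0
    obtain ⟨β, hβγ, hβ⟩ := exists_lt_forall_Ico_eq hγ0 (hcont γ hγ)
    refine ⟨β, hβγ, ?_⟩
    rw [inter_assoc]
    exact hs.otp_Ct_addModifier_inter_lt_of_eqOn hlegal (inter_subset_left.trans hIl)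
      (hIc.inter ordConnected_Ico) (fun x hx => hn x hx.1) fun ξ hξ => hβ ξ hξ.2
  have := otp_inter_Iio_lt (isPrincipal_add_lift_mul_omega0 _) hs.lift_ord_mul_omega0_pos
    hpiece l le_rfl
  rwa [inter_assoc, inter_eq_left.2 hIl] at this

end addModifier

theorem stmt15_general (κ : Cardinal.{u}) (l : Ordinal.{u}) (s : Ordinal.{u} → ℕ)
    (hs : InSkappa κ l s) (m : Ordinal.{u} → ℤ)
    (hcont : ∀ x < (Order.succ κ).ord, Order.IsSuccLimit x →
      ∃ β < x, ∀ ξ, β ≤ ξ → ξ ≤ x → m ξ = m x)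
    (hlegal : ∀ ξ < l, 0 ≤ (s ξ : ℤ) + m ξ) :
    InSkappa κ l (fun ξ => ((s ξ : ℤ) + m ξ).toNat) := by
  have hcont' : ∀ x ≤ l, Order.IsSuccLimit x → ∃ β < x, ∀ ξ, β ≤ ξ → ξ ≤ x → m ξ = m x :=
    fun x hx => hcont x (hx.trans_lt hs.2.1)
  have hle : ∀ n : ℕ, ∀ x < l, Order.IsSuccLimit x →
      UnbddBelow (Ct (addModifier s m) l n) x → addModifier s m x ≤ n :=
    fun n x hx hlim => hs.addModifier_le_of_unbddBelow hx hlim (hcont' x hx.le hlim)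
  exact ⟨hs.1, hs.2.1, hle,
    fun x hx hlim => ⟨hs.unbddBelow_Ct_addModifier hx hlim (hcont' x hx.le hlim) (hlegal x hx),
      fun n => hle n x hx hlim⟩,
    fun n I hIl hIc hn => hs.otp_Ct_addModifier_inter_lt hcont' hlegal hIl hIc hn⟩

/-- If `s ∈ 𝕊_κ` and `m` is a `ρ₂`-modifier (continuous, eventually constant,
ℤ-valued) legal for `s`, then `s + m` belongs to `𝕊_κ`. -/
theorem stmt15 (κ : Cardinal.{u}) (hκ : ℵ₀ ≤ κ) (l : Ordinal.{u}) (s : Ordinal.{u} → ℕ)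
    (hs : InSkappa κ l s) (m : Ordinal.{u} → ℤ)
    (hcont : ∀ x < (Order.succ κ).ord, Order.IsSuccLimit x →
      ∃ β < x, ∀ ξ, β ≤ ξ → ξ ≤ x → m ξ = m x)
    (hconst : ∃ ζ < (Order.succ κ).ord, ∀ ξ, ζ ≤ ξ → ξ < (Order.succ κ).ord → m ξ = m ζ)
    (hlegal : ∀ ξ < l, 0 ≤ (s ξ : ℤ) + m ξ) :
    InSkappa κ l (fun ξ => ((s ξ : ℤ) + m ξ).toNat) :=
  stmt15_general κ l s hs m hcont hlegal
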